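/- arXiv:2307.12943 — 6 statements merged into one kernel-verified Lean document; each statement's English description precedes it below -/
import Mathlib

section
/- Let $P \in \mathbb{R}^{m \times m}$ be an orthogonal projection matrix (i.e., $P = P^\top = P^2$). Then the Hadamard (entrywise) product $P \circ P$ satisfies $P \circ P \preceq \mathrm{Diag}(P)$, where $\mathrm{Diag}(P)$ is the diagonal matrix with the same diagonal entries as $P$. Equivalently, $\mathrm{Diag}(P) - P \circ P$ is positive semidefinite. -/
/-! Both `P` and `1 - P` are orthogonal projections, hence positive semidefinite, so by the Schur
product theorem so is `P ∘ (1 - P) = Diag(P) - P ∘ P`. -/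

open Matrix

open scoped ComplexOrder MatrixOrder

namespace Matrix

theorem hadamard_one_sub {n α : Type*} [DecidableEq n] [Ring α] (M : Matrix n n α) :
    M ⊙ (1 - M) = diagonal M.diag - M ⊙ M := by
  ext i j
  by_cases h : i = j
  · subst h; simp [mul_sub]
  · simp [h]

theorem posSemidef_diagonal_diag_sub_hadamard_self {n 𝕜 : Type*} [Fintype n] [DecidableEq n]
    [RCLike 𝕜] {P : Matrix n n 𝕜} (hP : IsStarProjection P) :
    (diagonal P.diag - P ⊙ P).PosSemidef := by
  rw [← hadamard_one_sub]
  exact (nonneg_iff_posSemidef.mp hP.nonneg).hadamard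
    (nonneg_iff_posSemidef.mp hP.one_sub_nonneg)

end Matrix

theorem hadamard_sq_le_diag_of_proj {m : ℕ} (P : Matrix (Fin m) (Fin m) ℝ)
    (hsymm : Pᵀ = P) (hproj : P * P = P) :
    (Matrix.diagonal (fun i => P i i) - Matrix.hadamard P P).PosSemidef := by
  have hP : IsStarProjection P := by
    refine ⟨hproj, ?_⟩
    rw [IsSelfAdjoint, star_eq_conjTranspose, conjTranspose_eq_transpose_of_trivial, hsymm]
  exact posSemidef_diagonal_diag_sub_hadamard_self hP
end

section
/- Let $X$ be a $d \times d$ real symmetric positive definite matrix and let $H$ be a $d \times d$ real symmetric matrix such that both $X + H$ and $X - H$ are positive semidefinite. Then $\mathrm{tr}(X^{-1} H X^{-1} H) \leq d$. -/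
/-!
Writing `X + H` and `X - H` as `X (1 + X⁻¹H)` and `X (1 - X⁻¹H)` gives
`X⁻¹ (X + H) X⁻¹ (X - H) = 1 - X⁻¹ H X⁻¹ H`. The left side is the product of two positive
semidefinite matrices, so its trace is nonnegative, and the trace of the right side is
`d - tr (X⁻¹ H X⁻¹ H)`.
-/

namespace Matrix

section PosSemidef

open scoped ComplexOrder MatrixOrder

variable {n 𝕜 : Type*} [Fintype n] [RCLike 𝕜]

theorem PosSemidef.trace_mul_nonneg {A B : Matrix n n 𝕜} (hA : A.PosSemidef)
    (hB : B.PosSemidef) : 0 ≤ (A * B).trace := by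
  classical
  obtain ⟨C, rfl⟩ := CStarAlgebra.nonneg_iff_eq_star_mul_self.mp hA.nonneg
  rw [star_eq_conjTranspose, Matrix.mul_assoc, trace_mul_comm]
  exact (hB.mul_mul_conjTranspose_same C).trace_nonneg

end PosSemidef

theorem inv_mul_add_mul_inv_mul_sub {n R : Type*} [Fintype n] [DecidableEq n] [CommRing R]
    {X : Matrix n n R} (hX : IsUnit X.det) (H : Matrix n n R) :
    X⁻¹ * (X + H) * X⁻¹ * (X - H) = 1 - X⁻¹ * H * X⁻¹ * H := by
  rw [Matrix.mul_assoc (X⁻¹ * (X + H)), Matrix.mul_add, Matrix.mul_sub, nonsing_inv_mul X hX]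
  noncomm_ring

end Matrix

open Matrix

theorem trace_local_norm_le_dim_general {d : ℕ} (X H : Matrix (Fin d) (Fin d) ℝ)
    (hX : X.PosDef)
    (h1 : (X + H).PosSemidef) (h2 : (X - H).PosSemidef) :
    (X⁻¹ * H * X⁻¹ * H).trace ≤ (d : ℝ) := by
  have hdet : IsUnit X.det := isUnit_iff_ne_zero.mpr hX.det_pos.ne'
  have hXinv : X⁻¹ᴴ = X⁻¹ := hX.isHermitian.inv.eq
  have hconj : (X⁻¹ * (X + H) * X⁻¹).PosSemidef := by
    simpa only [hXinv] using h1.conjTranspose_mul_mul_same X⁻¹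
  have htrace := hconj.trace_mul_nonneg h2
  rw [inv_mul_add_mul_inv_mul_sub hdet, trace_sub, trace_one, Fintype.card_fin] at htrace
  linarith

theorem trace_local_norm_le_dim {d : ℕ} (X H : Matrix (Fin d) (Fin d) ℝ)
    (hX : X.PosDef) (hH : H.IsHermitian)
    (h1 : (X + H).PosSemidef) (h2 : (X - H).PosSemidef) :
    (X⁻¹ * H * X⁻¹ * H).trace ≤ (d : ℝ) :=
  trace_local_norm_le_dim_general X H hX h1 h2
end

section
/- Let $X$ be a $d \times d$ real symmetric positive definite matrix and let $V, H$ be $d \times d$ real symmetric matrices. Then $2\,\mathrm{tr}(X^{-1} V X^{-1} V X^{-1} H X^{-1} H) + \mathrm{tr}(X^{-1} V X^{-1} H X^{-1} V X^{-1} H) \geq 0$. -/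
/-!
Writing `X⁻¹ = Cᵀ * C` and `A = C * (V * X⁻¹ * H) * Cᵀ`, the two traces become `tr (Aᵀ * A)` and
`tr (A * A)`. The first is a sum of squares, and `|tr (A * A)| ≤ tr (Aᵀ * A)` is Cauchy–Schwarz for
the trace inner product, obtained here from `0 ≤ tr ((A + Aᵀ)ᵀ * (A + Aᵀ))`.
-/

open Matrix
open scoped MatrixOrder

variable {n R : Type*} [Fintype n]

theorem Matrix.trace_transpose_mul_self_nonneg [CommRing R] [LinearOrder R] [IsStrictOrderedRing R]
    (A : Matrix n n R) : 0 ≤ (Aᵀ * A).trace :=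
  Finset.sum_nonneg fun _ _ => Finset.sum_nonneg fun _ _ => mul_self_nonneg _

theorem Matrix.neg_trace_transpose_mul_self_le_trace_mul_self [CommRing R] [LinearOrder R]
    [IsStrictOrderedRing R] (A : Matrix n n R) : -(Aᵀ * A).trace ≤ (A * A).trace := by
  have h := trace_transpose_mul_self_nonneg (A + Aᵀ)
  have hcross : (Aᵀ * Aᵀ).trace = (A * A).trace := by
    rw [← transpose_mul, trace_transpose]
  rw [transpose_add, transpose_transpose, add_mul, mul_add, mul_add, trace_add, trace_add,
    trace_add, trace_mul_comm A Aᵀ, hcross] at h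
  linarith

theorem Matrix.PosSemidef.exists_eq_transpose_mul_self {S : Matrix n n ℝ} (hS : S.PosSemidef) :
    ∃ C : Matrix n n ℝ, S = Cᵀ * C := by
  classical
  refine ⟨CFC.sqrt S, ?_⟩
  rw [← conjTranspose_eq_transpose_of_trivial, (CFC.sqrt_nonneg S).posSemidef.isHermitian.eq,
    CFC.sqrt_mul_sqrt_self S hS.nonneg]

theorem Matrix.PosSemidef.two_mul_trace_add_trace_nonneg {S : Matrix n n ℝ} (hS : S.PosSemidef)
    (B : Matrix n n ℝ) : 0 ≤ 2 * (S * B * S * Bᵀ).trace + (S * B * S * B).trace := by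
  obtain ⟨C, rfl⟩ := hS.exists_eq_transpose_mul_self
  set A := C * B * Cᵀ
  have h₁ : (Cᵀ * C * B * (Cᵀ * C) * Bᵀ).trace = (Aᵀ * A).trace := by
    rw [trace_mul_comm Aᵀ]
    simp only [A, transpose_mul, transpose_transpose, Matrix.mul_assoc]
    rw [trace_mul_comm Cᵀ]
    simp only [Matrix.mul_assoc]
  have h₂ : (Cᵀ * C * B * (Cᵀ * C) * B).trace = (A * A).trace := by
    simp only [A, Matrix.mul_assoc]
    rw [trace_mul_comm Cᵀ]
    simp only [Matrix.mul_assoc]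
  rw [h₁, h₂]
  linarith [trace_transpose_mul_self_nonneg A, neg_trace_transpose_mul_self_le_trace_mul_self A]

theorem logdet_metric_second_deriv_nonneg {d : ℕ}
    (X V H : Matrix (Fin d) (Fin d) ℝ)
    (hX : X.PosDef) (hV : V.IsHermitian) (hH : H.IsHermitian) :
    0 ≤ 2 * (X⁻¹ * V * X⁻¹ * V * X⁻¹ * H * X⁻¹ * H).trace
        + (X⁻¹ * V * X⁻¹ * H * X⁻¹ * V * X⁻¹ * H).trace := by
  set B := V * X⁻¹ * H
  have hBt : Bᵀ = H * X⁻¹ * V := by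
    rw [← conjTranspose_eq_transpose_of_trivial]
    simp only [B, conjTranspose_mul, hV.eq, hH.eq, hX.inv.isHermitian.eq, Matrix.mul_assoc]
  have hfirst : (X⁻¹ * V * X⁻¹ * V * X⁻¹ * H * X⁻¹ * H).trace = (X⁻¹ * B * X⁻¹ * Bᵀ).trace := by
    rw [hBt]
    simp only [B, Matrix.mul_assoc]
    rw [← Matrix.mul_assoc X⁻¹ V, trace_mul_comm (X⁻¹ * V)]
    simp only [Matrix.mul_assoc]
  have hsecond : X⁻¹ * V * X⁻¹ * H * X⁻¹ * V * X⁻¹ * H = X⁻¹ * B * X⁻¹ * B := by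
    simp only [B, Matrix.mul_assoc]
  rw [hfirst, hsecond]
  exact hX.inv.posSemidef.two_mul_trace_add_trace_nonneg B
end

section
/- Let $K_1, K_2 \subset \mathbb{R}^d$ be convex sets and let $g_i : \mathrm{int}(K_i) \to \mathbb{S}_+^d$ be positive semidefinite matrix functions such that $g_i$ is $\bar\nu_i$-symmetric on $K_i$ for $i = 1, 2$; that is, for every $x$, the Dikin ellipsoid $\{y : (y-x)^\top g_i(x)(y-x) \leq 1\}$ is contained in $K_i \cap (2x - K_i)$, and $K_i \cap (2x - K_i)$ is contained in $\{y : (y-x)^\top g_i(x)(y-x) \leq \bar\nu_i\}$. Then $g_1 + g_2$ is $(\bar\nu_1 + \bar\nu_2)$-symmetric on $K_1 \cap K_2$. -/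
/-!
Both forms are nonnegative, so the unit ellipsoid of `g₁ + g₂` lies in the unit ellipsoid of each
`gᵢ`, hence in both symmetrizations; and the outer bounds simply add. What makes the intersection
work is that `K ∩ (2x - K)` commutes with intersecting `K`, as `z = 2x - y` is determined by `y`.
-/

open Matrix

section Sandwich

variable {α : Type*} {q₁ q₂ : α → ℝ} {S₁ S₂ : Set α} {ν₁ ν₂ : ℝ}

theorem sublevel_add_subset_inter (hq₁ : ∀ a, 0 ≤ q₁ a) (hq₂ : ∀ a, 0 ≤ q₂ a)
    (h₁ : {a | q₁ a ≤ 1} ⊆ S₁) (h₂ : {a | q₂ a ≤ 1} ⊆ S₂) :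
    {a | q₁ a + q₂ a ≤ 1} ⊆ S₁ ∩ S₂ := fun a (ha : q₁ a + q₂ a ≤ 1) =>
  ⟨h₁ (show q₁ a ≤ 1 by linarith [hq₂ a]), h₂ (show q₂ a ≤ 1 by linarith [hq₁ a])⟩

theorem inter_subset_sublevel_add
    (h₁ : S₁ ⊆ {a | q₁ a ≤ ν₁}) (h₂ : S₂ ⊆ {a | q₂ a ≤ ν₂}) :
    S₁ ∩ S₂ ⊆ {a | q₁ a + q₂ a ≤ ν₁ + ν₂} := fun a ha =>
  (add_le_add (h₁ ha.1) (h₂ ha.2) : q₁ a + q₂ a ≤ ν₁ + ν₂)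

end Sandwich

section Symmetrization

variable {E : Type*} [AddCommGroup E] [Module ℝ E]

def symmetrization (K : Set E) (x : E) : Set E :=
  {y | y ∈ K ∧ ∃ z ∈ K, y = (2 : ℝ) • x - z}

theorem symmetrization_inter (K₁ K₂ : Set E) (x : E) :
    symmetrization (K₁ ∩ K₂) x = symmetrization K₁ x ∩ symmetrization K₂ x := by
  ext y
  constructor
  · rintro ⟨⟨hy₁, hy₂⟩, z, ⟨hz₁, hz₂⟩, rfl⟩
    exact ⟨⟨hy₁, z, hz₁, rfl⟩, ⟨hy₂, z, hz₂, rfl⟩⟩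
  · rintro ⟨⟨hy₁, z, hz₁, rfl⟩, hy₂, z', hz₂, hzz'⟩
    obtain rfl : z = z' := sub_right_injective hzz'
    exact ⟨⟨hy₁, hy₂⟩, z, ⟨hz₁, hz₂⟩, rfl⟩

end Symmetrization

section SymmetricMetric

variable {n : Type*} [Fintype n]

/-- The forms are squared `g x`-norms, so the bound `ν` is the radius `√ν` of the outer ellipsoid. -/
def IsSymmetricOn (g : (n → ℝ) → Matrix n n ℝ) (ν : ℝ) (K : Set (n → ℝ)) : Prop :=
  ∀ x ∈ K, {y | (y - x) ⬝ᵥ (g x *ᵥ (y - x)) ≤ 1} ⊆ symmetrization K x ∧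
    symmetrization K x ⊆ {y | (y - x) ⬝ᵥ (g x *ᵥ (y - x)) ≤ ν}

theorem IsSymmetricOn.add {g₁ g₂ : (n → ℝ) → Matrix n n ℝ} {ν₁ ν₂ : ℝ} {K₁ K₂ : Set (n → ℝ)}
    (h₁ : IsSymmetricOn g₁ ν₁ K₁) (h₂ : IsSymmetricOn g₂ ν₂ K₂)
    (hpsd₁ : ∀ x ∈ K₁, (g₁ x).PosSemidef) (hpsd₂ : ∀ x ∈ K₂, (g₂ x).PosSemidef) :
    IsSymmetricOn (g₁ + g₂) (ν₁ + ν₂) (K₁ ∩ K₂) := by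
  rintro x ⟨hx₁, hx₂⟩
  have hform : ∀ y, (y - x) ⬝ᵥ ((g₁ + g₂) x *ᵥ (y - x)) =
      (y - x) ⬝ᵥ (g₁ x *ᵥ (y - x)) + (y - x) ⬝ᵥ (g₂ x *ᵥ (y - x)) := fun y => by
    rw [Pi.add_apply, add_mulVec, dotProduct_add]
  simp only [hform, symmetrization_inter]
  exact ⟨sublevel_add_subset_inter (fun y => (hpsd₁ x hx₁).dotProduct_mulVec_nonneg (y - x))
      (fun y => (hpsd₂ x hx₂).dotProduct_mulVec_nonneg (y - x)) (h₁ x hx₁).1 (h₂ x hx₂).1,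
    inter_subset_sublevel_add (h₁ x hx₁).2 (h₂ x hx₂).2⟩

end SymmetricMetric

theorem symmetry_param_additive_general {d : ℕ} (K1 K2 : Set (Fin d → ℝ))
    (g1 g2 : (Fin d → ℝ) → Matrix (Fin d) (Fin d) ℝ) (ν1 ν2 : ℝ)
    (hpsd1 : ∀ x ∈ K1, (g1 x).PosSemidef)
    (hpsd2 : ∀ x ∈ K2, (g2 x).PosSemidef)
    (hsym1 : ∀ x ∈ K1,
      (∀ y : Fin d → ℝ, (y - x) ⬝ᵥ ((g1 x) *ᵥ (y - x)) ≤ 1 →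
        y ∈ K1 ∧ ∃ z ∈ K1, y = (2 : ℝ) • x - z) ∧
      (∀ y : Fin d → ℝ, (y ∈ K1 ∧ ∃ z ∈ K1, y = (2 : ℝ) • x - z) →
        (y - x) ⬝ᵥ ((g1 x) *ᵥ (y - x)) ≤ ν1))
    (hsym2 : ∀ x ∈ K2,
      (∀ y : Fin d → ℝ, (y - x) ⬝ᵥ ((g2 x) *ᵥ (y - x)) ≤ 1 →
        y ∈ K2 ∧ ∃ z ∈ K2, y = (2 : ℝ) • x - z) ∧
      (∀ y : Fin d → ℝ, (y ∈ K2 ∧ ∃ z ∈ K2, y = (2 : ℝ) • x - z) →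
        (y - x) ⬝ᵥ ((g2 x) *ᵥ (y - x)) ≤ ν2)) :
    ∀ x ∈ K1 ∩ K2,
      (∀ y : Fin d → ℝ, (y - x) ⬝ᵥ ((g1 x + g2 x) *ᵥ (y - x)) ≤ 1 →
        y ∈ K1 ∩ K2 ∧ ∃ z ∈ K1 ∩ K2, y = (2 : ℝ) • x - z) ∧
      (∀ y : Fin d → ℝ, (y ∈ K1 ∩ K2 ∧ ∃ z ∈ K1 ∩ K2, y = (2 : ℝ) • x - z) →
        (y - x) ⬝ᵥ ((g1 x + g2 x) *ᵥ (y - x)) ≤ ν1 + ν2) :=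
  IsSymmetricOn.add hsym1 hsym2 hpsd1 hpsd2

/-- Symmetry parameters of Dikin-amenable metrics are additive: if `gᵢ` is
`ν̄ᵢ`-symmetric on `Kᵢ`, then `g₁ + g₂` is `(ν̄₁ + ν̄₂)`-symmetric on `K₁ ∩ K₂`. -/
theorem symmetry_param_additive {d : ℕ} (K1 K2 : Set (Fin d → ℝ))
    (hK1 : Convex ℝ K1) (hK2 : Convex ℝ K2)
    (g1 g2 : (Fin d → ℝ) → Matrix (Fin d) (Fin d) ℝ) (ν1 ν2 : ℝ)
    (hpsd1 : ∀ x ∈ K1, (g1 x).PosSemidef)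
    (hpsd2 : ∀ x ∈ K2, (g2 x).PosSemidef)
    (hsym1 : ∀ x ∈ K1,
      (∀ y : Fin d → ℝ, (y - x) ⬝ᵥ ((g1 x) *ᵥ (y - x)) ≤ 1 →
        y ∈ K1 ∧ ∃ z ∈ K1, y = (2 : ℝ) • x - z) ∧
      (∀ y : Fin d → ℝ, (y ∈ K1 ∧ ∃ z ∈ K1, y = (2 : ℝ) • x - z) →
        (y - x) ⬝ᵥ ((g1 x) *ᵥ (y - x)) ≤ ν1))
    (hsym2 : ∀ x ∈ K2,
      (∀ y : Fin d → ℝ, (y - x) ⬝ᵥ ((g2 x) *ᵥ (y - x)) ≤ 1 →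
        y ∈ K2 ∧ ∃ z ∈ K2, y = (2 : ℝ) • x - z) ∧
      (∀ y : Fin d → ℝ, (y ∈ K2 ∧ ∃ z ∈ K2, y = (2 : ℝ) • x - z) →
        (y - x) ⬝ᵥ ((g2 x) *ᵥ (y - x)) ≤ ν2)) :
    ∀ x ∈ K1 ∩ K2,
      (∀ y : Fin d → ℝ, (y - x) ⬝ᵥ ((g1 x + g2 x) *ᵥ (y - x)) ≤ 1 →
        y ∈ K1 ∩ K2 ∧ ∃ z ∈ K1 ∩ K2, y = (2 : ℝ) • x - z) ∧
      (∀ y : Fin d → ℝ, (y ∈ K1 ∩ K2 ∧ ∃ z ∈ K1 ∩ K2, y = (2 : ℝ) • x - z) →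
        (y - x) ⬝ᵥ ((g1 x + g2 x) *ᵥ (y - x)) ≤ ν1 + ν2) :=
  symmetry_param_additive_general K1 K2 g1 g2 ν1 ν2 hpsd1 hpsd2 hsym1 hsym2
end

section
/- Let $X$ be a $d \times d$ symmetric positive definite matrix and let $\phi(X) = -\log\det X$. Then $\log\det(\nabla^2 \phi(X)) = \frac{d(d-1)}{2}\log 2 - (d+1)\log\det X$, where $\nabla^2 \phi(X)$ is the Hessian of $\phi$ viewed as a function on the $\frac{d(d+1)}{2}$-dimensional space of symmetric matrices (via the symmetric vectorization). In particular, $X \mapsto \log\det(\nabla^2\phi(X))$ is convex on the positive definite cone. -/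
/-!
Let `M` be the duplication matrix, `M v = vec S` for the symmetric `S` with `svec S = v`. Then
`(A ⊗ A) M = M ρ(A)`, where `ρ(A)` is the matrix of `S ↦ A S Aᵀ` in `svec` coordinates, so
`Mᵀ (A ⊗ A) M = (Mᵀ M) ρ(A)`. Here `Mᵀ M` is diagonal with entries `1` on the `d` diagonal indices
and `2` on the `d(d-1)/2` others, while `ρ` is multiplicative with
`ρ(diag v) = diag (v i * v j)_{j ≤ i}`; each `v i` occurs `d + 1` times in that product, so the
spectral theorem gives `det ρ(A) = (det A)^(d+1)` for symmetric `A`. With `A = X⁻¹` this is the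
formula, and convexity reduces to the concavity of `log det`: writing `Y = Bᵀ B` and
`Z = Bᵀ W B`, the inequality becomes `b log det W ≤ log det (a + b W)`, which is the concavity of
`log` on the eigenvalues of `W`.
-/

open Matrix Kronecker Finset

abbrev SvecIndex (n : Type*) [LE n] := {p : n × n // p.2 ≤ p.1}

namespace SvecIndex

variable {n : Type*} [LinearOrder n]

def ofPair (ij : n × n) : SvecIndex n := ⟨(max ij.1 ij.2, min ij.1 ij.2), min_le_max⟩

lemma ofPair_val (p : SvecIndex n) : ofPair p.1 = p :=
  Subtype.ext (Prod.ext (max_eq_left p.2) (min_eq_right p.2))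

lemma ofPair_swap (ij : n × n) : ofPair ij.swap = ofPair ij :=
  Subtype.ext (Prod.ext (max_comm _ _) (min_comm _ _))

lemma ofPair_eq_iff {ij : n × n} {p : SvecIndex n} :
    ofPair ij = p ↔ p.1 = ij ∨ p.1 = ij.swap := by
  obtain ⟨⟨a, b⟩, hab⟩ := p
  obtain ⟨i, j⟩ := ij
  simp only [ofPair, Subtype.ext_iff, Prod.ext_iff, Prod.swap]
  grind

variable [Fintype n]

lemma card_filter_ofPair_eq (p : SvecIndex n) :
    #{ij | ofPair ij = p} = if p.1.1 = p.1.2 then 1 else 2 := by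
  have hfiber : ({ij | ofPair ij = p} : Finset (n × n)) = {p.1, p.1.swap} := by
    ext ij
    simp only [mem_filter, mem_univ, true_and, mem_insert, mem_singleton, ofPair_eq_iff]
    constructor <;> rintro (h | h) <;> simp [h]
  have hdiag : p.1.swap = p.1 ↔ p.1.1 = p.1.2 := by simp [Prod.ext_iff, eq_comm]
  rw [hfiber]
  split_ifs with h
  · simp [hdiag.mpr h]
  · exact card_pair fun h' => h (hdiag.mp h'.symm)

@[to_additive]
lemma prod_svecIndex {M : Type*} [CommMonoid M] (g : n × n → M) :
    ∏ p : SvecIndex n, g p.1 = ∏ i, ∏ j, if j ≤ i then g (i, j) else 1 := by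
  rw [← Finset.prod_subtype (univ.filter fun p : n × n => p.2 ≤ p.1) (by simp), prod_filter,
    Fintype.prod_prod_type]

lemma card_le_add_card_ge (i : n) : #{j | j ≤ i} + #{j | i ≤ j} = Fintype.card n + 1 := by
  have hunion : (univ.filter (· ≤ i) ∪ univ.filter (i ≤ ·)) = univ := by
    ext j; simp [le_total]
  have hinter : (univ.filter (· ≤ i) ∩ univ.filter (i ≤ ·)) = {i} := by
    ext j; simp [le_antisymm_iff]
  rw [← card_union_add_card_inter, hunion, hinter, card_univ, card_singleton]

lemma two_mul_card : 2 * Fintype.card (SvecIndex n) = Fintype.card n * (Fintype.card n + 1) := by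
  have hcard : Fintype.card (SvecIndex n) = ∑ i : n, #{j | j ≤ i} := by
    simpa using sum_svecIndex (n := n) fun _ => (1 : ℕ)
  have hcard' : Fintype.card (SvecIndex n) = ∑ i : n, #{j | i ≤ j} := by
    rw [hcard]
    simp only [card_eq_sum_ones, sum_filter]
    exact sum_comm
  calc 2 * Fintype.card (SvecIndex n) = ∑ i : n, (#{j | j ≤ i} + #{j | i ≤ j}) := by
        rw [sum_add_distrib, ← hcard, ← hcard', two_mul]
    _ = Fintype.card n * (Fintype.card n + 1) := by simp [card_le_add_card_ge]

lemma prod_fst_mul_snd {M : Type*} [CommMonoid M] (v : n → M) :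
    ∏ p : SvecIndex n, v p.1.1 * v p.1.2 = (∏ i, v i) ^ (Fintype.card n + 1) := by
  have hfst : ∏ p : SvecIndex n, v p.1.1 = ∏ i, v i ^ #{j | j ≤ i} := by
    simp [prod_svecIndex fun ij => v ij.1, prod_ite, prod_const]
  have hsnd : ∏ p : SvecIndex n, v p.1.2 = ∏ i, v i ^ #{j | i ≤ j} := by
    rw [prod_svecIndex fun ij => v ij.2, prod_comm]
    simp [prod_ite, prod_const]
  rw [prod_mul_distrib, hfst, hsnd, ← prod_mul_distrib, ← prod_pow]
  simp only [← pow_add, card_le_add_card_ge]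

lemma prod_ite_diag {M : Type*} [CommMonoid M] (a : M) :
    ∏ p : SvecIndex n, (if p.1.1 = p.1.2 then a else 1) = a ^ Fintype.card n := by
  have hdiag (i j : n) :
      (if j ≤ i then if i = j then a else 1 else 1) = if i = j then a else 1 := by
    split_ifs <;> simp_all
  simp [prod_svecIndex fun ij => if ij.1 = ij.2 then a else 1, hdiag]

end SvecIndex

namespace Matrix

open SvecIndex

variable (R : Type*) (n : Type*) [CommSemiring R] [LinearOrder n]

def duplicationMatrix : Matrix (n × n) (SvecIndex n) R :=
  of fun ij p => if ofPair ij = p then 1 else 0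

variable {R n}

lemma submatrix_val_duplicationMatrix :
    (duplicationMatrix R n).submatrix (Subtype.val : SvecIndex n → n × n) id = 1 := by
  ext p q
  simp [duplicationMatrix, one_apply, ofPair_val]

variable [Fintype n]

lemma duplicationMatrix_mul {m : Type*} (B : Matrix (SvecIndex n) m R) :
    duplicationMatrix R n * B = B.submatrix ofPair id := by
  ext ij q
  simp [duplicationMatrix, mul_apply]

lemma transpose_duplicationMatrix_mul_self :
    (duplicationMatrix R n)ᵀ * duplicationMatrix R n
      = diagonal fun p => if p.1.1 = p.1.2 then 1 else 2 := by
  ext p q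
  simp only [mul_apply, transpose_apply, duplicationMatrix, of_apply, boole_mul, ← ite_and]
  by_cases hpq : p = q
  · subst hpq
    simp only [and_self, sum_boole, card_filter_ofPair_eq, diagonal_apply_eq]
    split_ifs <;> norm_num
  · rw [diagonal_apply_ne _ hpq]
    exact sum_eq_zero fun ij _ => if_neg fun h => hpq (h.1.symm.trans h.2)

/-- The matrix of the congruence `S ↦ A * S * Aᵀ` on symmetric matrices, in `svec` coordinates. -/
def svecCongr (A : Matrix n n R) : Matrix (SvecIndex n) (SvecIndex n) R :=
  ((A ⊗ₖ A) * duplicationMatrix R n).submatrix Subtype.val id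

lemma kronecker_mul_duplicationMatrix_swap (A : Matrix n n R) (ij : n × n) (q : SvecIndex n) :
    ((A ⊗ₖ A) * duplicationMatrix R n) ij.swap q = ((A ⊗ₖ A) * duplicationMatrix R n) ij q := by
  simp only [mul_apply, kroneckerMap_apply]
  refine Fintype.sum_equiv (Equiv.prodComm n n) _ _ fun kl => ?_
  simp [duplicationMatrix, ofPair_swap, mul_comm]

lemma kronecker_mul_duplicationMatrix (A : Matrix n n R) :
    (A ⊗ₖ A) * duplicationMatrix R n = duplicationMatrix R n * svecCongr A := by
  rw [duplicationMatrix_mul]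
  ext ij q
  rcases ofPair_eq_iff.mp (rfl : ofPair ij = ofPair ij) with h | h
  · simp [svecCongr, h]
  · simp [svecCongr, h, kronecker_mul_duplicationMatrix_swap]

lemma svecCongr_mul (A B : Matrix n n R) : svecCongr (A * B) = svecCongr A * svecCongr B := by
  rw [svecCongr, mul_kronecker_mul, Matrix.mul_assoc, kronecker_mul_duplicationMatrix,
    ← Matrix.mul_assoc]
  rfl

lemma svecCongr_one : svecCongr (1 : Matrix n n R) = 1 := by
  simp [svecCongr, submatrix_val_duplicationMatrix]

lemma svecCongr_diagonal (v : n → R) :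
    svecCongr (diagonal v) = diagonal fun p => v p.1.1 * v p.1.2 := by
  ext p q
  simp [svecCongr, diagonal_kronecker_diagonal, diagonal_mul, duplicationMatrix, ofPair_val,
    diagonal_apply]

section CommRing

variable {R : Type*} [CommRing R]

lemma det_transpose_duplicationMatrix_mul_self_mul_two_pow :
    ((duplicationMatrix R n)ᵀ * duplicationMatrix R n).det * 2 ^ Fintype.card n
      = 2 ^ Fintype.card (SvecIndex n) := by
  rw [transpose_duplicationMatrix_mul_self, det_diagonal, ← prod_ite_diag (2 : R),
    ← prod_mul_distrib]
  have htwo (p : SvecIndex n) :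
      (if p.1.1 = p.1.2 then 1 else 2) * (if p.1.1 = p.1.2 then 2 else 1) = (2 : R) := by
    split_ifs <;> simp
  simp [htwo]

lemma transpose_duplicationMatrix_mul_kronecker_mul (A : Matrix n n R) :
    (duplicationMatrix R n)ᵀ * (A ⊗ₖ A) * duplicationMatrix R n
      = (duplicationMatrix R n)ᵀ * duplicationMatrix R n * svecCongr A := by
  rw [Matrix.mul_assoc, kronecker_mul_duplicationMatrix, Matrix.mul_assoc]

lemma det_svecCongr_conj {U V : Matrix n n R} (hUV : U * V = 1) (D : Matrix n n R) :
    (svecCongr (U * D * V)).det = (svecCongr D).det := by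
  have hρ : (svecCongr U).det * (svecCongr V).det = 1 := by
    rw [← det_mul, ← svecCongr_mul, hUV, svecCongr_one, det_one]
  rw [svecCongr_mul, svecCongr_mul, det_mul, det_mul, mul_right_comm, hρ, one_mul]

end CommRing

lemma IsHermitian.det_svecCongr {𝕜 : Type*} [RCLike 𝕜] {A : Matrix n n 𝕜} (hA : A.IsHermitian) :
    (svecCongr A).det = A.det ^ (Fintype.card n + 1) := by
  have hU : (hA.eigenvectorUnitary : Matrix n n 𝕜) * star (hA.eigenvectorUnitary : Matrix n n 𝕜)
      = 1 := Unitary.mul_star_self_of_mem hA.eigenvectorUnitary.2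
  conv_lhs => rw [hA.spectral_theorem, Unitary.conjStarAlgAut_apply]
  rw [det_svecCongr_conj hU, svecCongr_diagonal, det_diagonal, SvecIndex.prod_fst_mul_snd,
    hA.det_eq_prod_eigenvalues]
  rfl

section LogDet

open Real

lemma convex_setOf_posDef {n : Type*} : Convex ℝ {A : Matrix n n ℝ | A.PosDef} := by
  intro A hA B hB a b ha hb hab
  rcases ha.eq_or_lt with rfl | ha
  · simpa [show b = 1 by linarith] using hB
  · exact (hA.smul ha).add_posSemidef (hB.posSemidef.smul hb)

variable {n : Type*} [Fintype n] [DecidableEq n]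

lemma IsHermitian.det_cfc {A : Matrix n n ℝ} (hA : A.IsHermitian) (f : ℝ → ℝ) :
    (cfc f A).det = ∏ i, f (hA.eigenvalues i) := by
  simp [hA.cfc_eq, IsHermitian.cfc, -Unitary.conjStarAlgAut_apply]

lemma PosDef.mul_log_det_le_log_det_smul_one_add_smul {W : Matrix n n ℝ} (hW : W.PosDef)
    {a b : ℝ} (ha : 0 ≤ a) (hb : 0 ≤ b) (hab : a + b = 1) :
    b * log W.det ≤ log (a • (1 : Matrix n n ℝ) + b • W).det := by
  have hcfc : cfc (fun x => a + b * x) W = a • (1 : Matrix n n ℝ) + b • W := by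
    rw [cfc_const_add a (fun x => b * x) W (by fun_prop) hW.1.isSelfAdjoint,
      cfc_const_mul_id b W hW.1.isSelfAdjoint, Algebra.algebraMap_eq_smul_one]
  have hμ (i : n) : 0 < hW.1.eigenvalues i := hW.eigenvalues_pos i
  have hpos (i : n) : 0 < a + b * hW.1.eigenvalues i := by
    simpa using convex_Ioi (0 : ℝ) (Set.mem_Ioi.mpr one_pos) (Set.mem_Ioi.mpr (hμ i)) ha hb hab
  rw [← hcfc, hW.1.det_cfc, hW.1.det_eq_prod_eigenvalues]
  simp only [RCLike.ofReal_real_eq_id, id]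
  rw [log_prod fun i _ => (hμ i).ne',
    log_prod fun i _ => (hpos i).ne', mul_sum]
  refine sum_le_sum fun i _ => ?_
  simpa using strictConcaveOn_log_Ioi.concaveOn.2 (Set.mem_Ioi.mpr one_pos)
    (Set.mem_Ioi.mpr (hμ i)) ha hb hab

open MatrixOrder in
lemma PosDef.exists_eq_star_mul_and_eq_star_mul_mul {Y Z : Matrix n n ℝ} (hY : Y.PosDef)
    (hZ : Z.PosDef) :
    ∃ B W : Matrix n n ℝ, W.PosDef ∧ Y = star B * B ∧ Z = star B * W * B := by
  obtain ⟨B, rfl⟩ := CStarAlgebra.nonneg_iff_eq_star_mul_self.mp hY.posSemidef.nonneg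
  have hB : IsUnit B := by
    rw [isUnit_iff_isUnit_det]
    refine (isUnit_of_mul_isUnit_right (x := (star B).det) ?_)
    rw [← det_mul]
    exact hY.isUnit.map detMonoidHom
  have hBB : B⁻¹ * B = 1 := nonsing_inv_mul B ((isUnit_iff_isUnit_det B).mp hB)
  refine ⟨B, star B⁻¹ * Z * B⁻¹,
    (IsUnit.posDef_star_left_conjugate_iff (isUnit_nonsing_inv_iff.mpr hB)).mpr hZ, rfl, ?_⟩
  calc Z = star (B⁻¹ * B) * Z * (B⁻¹ * B) := by simp [hBB]
    _ = star B * (star B⁻¹ * Z * B⁻¹) * B := by simp only [star_mul, Matrix.mul_assoc]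

lemma concaveOn_log_det : ConcaveOn ℝ {A : Matrix n n ℝ | A.PosDef} fun A => log A.det := by
  refine ⟨convex_setOf_posDef, fun Y hY Z hZ a b ha hb hab => ?_⟩
  obtain ⟨B, W, hW, rfl, rfl⟩ := hY.exists_eq_star_mul_and_eq_star_mul_mul hZ
  have hdet (V : Matrix n n ℝ) : (star B * V * B).det = (star B * B).det * V.det := by
    simp only [det_mul]; ring
  have hcomb : a • (star B * B) + b • (star B * W * B) = star B * (a • 1 + b • W) * B := by
    simp only [Matrix.mul_add, Matrix.add_mul, Matrix.mul_smul, Matrix.smul_mul, Matrix.mul_one]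
  have hYdet : 0 < (star B * B).det := hY.det_pos
  have hT : (a • 1 + b • W : Matrix n n ℝ).PosDef :=
    convex_setOf_posDef (PosDef.one : (1 : Matrix n n ℝ).PosDef) hW ha hb hab
  have hlog := hW.mul_log_det_le_log_det_smul_one_add_smul ha hb hab
  simp only [smul_eq_mul]
  rw [hcomb, hdet, hdet, log_mul hYdet.ne' hT.det_pos.ne', log_mul hYdet.ne' hW.det_pos.ne']
  linear_combination hlog + log (star B * B).det * hab

end LogDet

section Real

open Real

variable {n : Type*} [Fintype n] [LinearOrder n]

lemma det_transpose_duplicationMatrix_mul_self_pos :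
    0 < ((duplicationMatrix ℝ n)ᵀ * duplicationMatrix ℝ n).det := by
  have h := det_transpose_duplicationMatrix_mul_self_mul_two_pow (R := ℝ) (n := n)
  have hS : (0 : ℝ) < 2 ^ Fintype.card (SvecIndex n) := by positivity
  exact (mul_pos_iff_of_pos_right (by positivity)).mp (h ▸ hS)

lemma log_det_transpose_duplicationMatrix_mul_self :
    log ((duplicationMatrix ℝ n)ᵀ * duplicationMatrix ℝ n).det
      = Fintype.card n * (Fintype.card n - 1) / 2 * log 2 := by
  have hcard : (2 : ℝ) * Fintype.card (SvecIndex n) = Fintype.card n * (Fintype.card n + 1) := by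
    exact_mod_cast SvecIndex.two_mul_card
  have hlog := congrArg log (det_transpose_duplicationMatrix_mul_self_mul_two_pow (R := ℝ) (n := n))
  rw [log_mul det_transpose_duplicationMatrix_mul_self_pos.ne' (by positivity), log_pow,
    log_pow] at hlog
  linear_combination hlog + log 2 / 2 * hcard

lemma PosDef.log_det_transpose_duplicationMatrix_mul_inv_kronecker_mul {X : Matrix n n ℝ}
    (hX : X.PosDef) :
    log ((duplicationMatrix ℝ n)ᵀ * (X ⊗ₖ X)⁻¹ * duplicationMatrix ℝ n).det
      = Fintype.card n * (Fintype.card n - 1) / 2 * log 2 - (Fintype.card n + 1) * log X.det := by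
  have hdet := hX.det_pos
  rw [inv_kronecker, transpose_duplicationMatrix_mul_kronecker_mul, det_mul,
    hX.inv.isHermitian.det_svecCongr, det_nonsing_inv, Ring.inverse_eq_inv',
    log_mul det_transpose_duplicationMatrix_mul_self_pos.ne' (by positivity), log_pow, log_inv,
    log_det_transpose_duplicationMatrix_mul_self]
  push_cast
  ring

end Real

end Matrix

/-- For `φ(X) = -log det X` on the PD cone, with `M` the matrix mapping the symmetric
vectorization to the full vectorization, `∇²φ(X) = Mᵀ (X ⊗ X)⁻¹ M` and
`log det ∇²φ(X) = (d(d-1)/2) log 2 - (d+1) log det X`; in particular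
`X ↦ log det ∇²φ(X)` is convex on the cone of symmetric positive definite matrices. -/
theorem logdet_hessian_formula_and_convex {d : ℕ}
    (M : Matrix (Fin d × Fin d) {p : Fin d × Fin d // p.2.1 ≤ p.1.1} ℝ)
    (hM : ∀ (i j : Fin d) (p : {p : Fin d × Fin d // p.2.1 ≤ p.1.1}),
      M (i, j) p = if p.1 = (i, j) ∨ p.1 = (j, i) then 1 else 0)
    (X : Matrix (Fin d) (Fin d) ℝ) (hX : X.PosDef) :
    Real.log (Mᵀ * (X ⊗ₖ X)⁻¹ * M).det
      = (d : ℝ) * ((d : ℝ) - 1) / 2 * Real.log 2 - ((d : ℝ) + 1) * Real.log X.det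
    ∧ ConvexOn ℝ {Y : Matrix (Fin d) (Fin d) ℝ | Y.PosDef}
        (fun Y => Real.log (Mᵀ * (Y ⊗ₖ Y)⁻¹ * M).det) := by
  have hMdup : M = duplicationMatrix ℝ (Fin d) := by
    ext ⟨i, j⟩ p
    simp [hM, duplicationMatrix, SvecIndex.ofPair_eq_iff]
  subst hMdup
  have hformula (Y : Matrix (Fin d) (Fin d) ℝ) (hY : Y.PosDef) :
      Real.log ((duplicationMatrix ℝ (Fin d))ᵀ * (Y ⊗ₖ Y)⁻¹ * duplicationMatrix ℝ (Fin d)).det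
        = (d : ℝ) * ((d : ℝ) - 1) / 2 * Real.log 2 - ((d : ℝ) + 1) * Real.log Y.det := by
    simpa using hY.log_det_transpose_duplicationMatrix_mul_inv_kronecker_mul
  refine ⟨hformula X hX, ?_⟩
  refine ((convexOn_const ((d : ℝ) * ((d : ℝ) - 1) / 2 * Real.log 2) convex_setOf_posDef).sub
    (concaveOn_log_det.smul (by positivity : (0 : ℝ) ≤ d + 1))).congr fun Y hY => ?_
  simp [hformula Y hY]
end

section
/- Let $g$ be a symmetric positive definite $k \times k$ real matrix, let $\varepsilon > 0$, and let $M \in \mathbb{R}^{k \times m}$ satisfy $M M^\top = I_k$. Then $M (M^\top g M + \varepsilon I_m)^{-1} M^\top = (g + \varepsilon I_k)^{-1}$. -/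
/-! If `M * N = 1`, then `N` intertwines `g + c • 1` with `N * g * M + c • 1`, i.e.
`(N * g * M + c • 1) * N = N * (g + c • 1)`; inverting both sides of this push-through identity
and multiplying by `M` on the left gives `M * (N * g * M + c • 1)⁻¹ * N = (g + c • 1)⁻¹`.
For `N = Mᵀ`, `g` positive definite and `ε > 0`, both matrices are positive definite, hence
invertible. -/

open Matrix

namespace Matrix

variable {m n R : Type*} [Fintype m] [Fintype n] [DecidableEq m] [DecidableEq n]

theorem mul_mul_add_smul_one_mul_of_mul_eq_one [CommSemiring R] (g : Matrix m m R)
    {M : Matrix m n R} {N : Matrix n m R} (hMN : M * N = 1) (c : R) :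
    (N * g * M + c • 1) * N = N * (g + c • 1) := by
  rw [Matrix.add_mul, Matrix.mul_add, Matrix.mul_assoc, Matrix.mul_assoc, hMN, Matrix.mul_one,
    Matrix.smul_mul, Matrix.mul_smul, Matrix.one_mul, Matrix.mul_one]

theorem inv_mul_eq_mul_inv_of_mul_eq_mul [CommRing R] {A : Matrix n n R} {B : Matrix m m R}
    {N : Matrix n m R} (hA : IsUnit A) (hB : IsUnit B) (h : A * N = N * B) :
    A⁻¹ * N = N * B⁻¹ :=
  calc A⁻¹ * N = A⁻¹ * (N * B * B⁻¹) := by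
        rw [mul_nonsing_inv_cancel_right _ _ ((isUnit_iff_isUnit_det B).mp hB)]
    _ = A⁻¹ * (A * N) * B⁻¹ := by rw [← h]; simp only [Matrix.mul_assoc]
    _ = N * B⁻¹ := by rw [nonsing_inv_mul_cancel_left _ _ ((isUnit_iff_isUnit_det A).mp hA)]

theorem mul_inv_mul_add_smul_one_mul_of_mul_eq_one [CommRing R] {g : Matrix m m R}
    {M : Matrix m n R} {N : Matrix n m R} (hMN : M * N = 1) {c : R}
    (hA : IsUnit (N * g * M + c • 1)) (hB : IsUnit (g + c • 1)) :
    M * (N * g * M + c • 1)⁻¹ * N = (g + c • 1)⁻¹ := by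
  rw [Matrix.mul_assoc, inv_mul_eq_mul_inv_of_mul_eq_mul hA hB
    (mul_mul_add_smul_one_mul_of_mul_eq_one g hMN c), ← Matrix.mul_assoc, hMN, Matrix.one_mul]

end Matrix

theorem woodbury_projection_identity {k m : ℕ}
    (g : Matrix (Fin k) (Fin k) ℝ) (hg : g.PosDef)
    (M : Matrix (Fin k) (Fin m) ℝ) (hM : M * Mᵀ = 1)
    (ε : ℝ) (hε : 0 < ε) :
    M * (Mᵀ * g * M + ε • (1 : Matrix (Fin m) (Fin m) ℝ))⁻¹ * Mᵀ
      = (g + ε • (1 : Matrix (Fin k) (Fin k) ℝ))⁻¹ := by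
  have hεk : (ε • (1 : Matrix (Fin k) (Fin k) ℝ)).PosDef := PosDef.one.smul hε
  have hεm : (ε • (1 : Matrix (Fin m) (Fin m) ℝ)).PosDef := PosDef.one.smul hε
  have hA : (Mᵀ * g * M + ε • (1 : Matrix (Fin m) (Fin m) ℝ)).PosDef := by
    rw [← conjTranspose_eq_transpose_of_trivial]
    exact PosDef.posSemidef_add (hg.posSemidef.conjTranspose_mul_mul_same M) hεm
  exact mul_inv_mul_add_smul_one_mul_of_mul_eq_one hM hA.isUnit
    (hg.add_posSemidef hεk.posSemidef).isUnit
end
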